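/- arXiv:1607.01427 — 5 statements merged into one kernel-verified Lean document; each statement's English description precedes it below -/
import Mathlib

section
/- Let {U(t,s)} be an α-nonuniform exponentially bounded evolution family and let u : [0,∞) → X be continuous. Then the function t ↦ φ_α(t,u) := sup_{τ ≥ t} e^{−α(τ−t)}‖U(τ,t)u(t)‖ is continuous on [0,∞). -/
open MeasureTheory Set

/-- φ_α(t,u) = sup_{τ ≥ t} e^{−α(τ−t)} ‖U(τ,t)u(t)‖. -/
noncomputable def phi {X : Type*} [NormedAddCommGroup X] [NormedSpace ℝ X]
    (U : ℝ → ℝ → X →L[ℝ] X) (α t : ℝ) (u : ℝ → X) : ℝ :=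
  ⨆ τ : Ici t, Real.exp (-α * ((τ : ℝ) - t)) * ‖U τ t (u t)‖

/-- (Φ(t)u)(τ) = U(τ,t)u(t) for τ ≥ t, u(τ) for τ < t. -/
noncomputable def Phim {X : Type*} [NormedAddCommGroup X] [NormedSpace ℝ X]
    (U : ℝ → ℝ → X →L[ℝ] X) (t : ℝ) (u : ℝ → X) : ℝ → X :=
  fun τ => if t ≤ τ then U τ t (u t) else u τ

/-- u ∈ C_α : u continuous on [0,∞) and sup_{t≥0} φ_α(t,u) < ∞. -/
def MemC {X : Type*} [NormedAddCommGroup X] [NormedSpace ℝ X]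
    (U : ℝ → ℝ → X →L[ℝ] X) (α : ℝ) (u : ℝ → X) : Prop :=
  ContinuousOn u (Ici 0) ∧
    ∃ C : ℝ, ∀ t, 0 ≤ t → ∀ τ, t ≤ τ →
      Real.exp (-α * (τ - t)) * ‖U τ t (u t)‖ ≤ C

/-- ‖u‖_α = sup_{t ≥ 0} φ_α(t,u). -/
noncomputable def normC {X : Type*} [NormedAddCommGroup X] [NormedSpace ℝ X]
    (U : ℝ → ℝ → X →L[ℝ] X) (α : ℝ) (u : ℝ → X) : ℝ :=
  ⨆ t : Ici (0:ℝ), phi U α (t : ℝ) u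

/-- γ is an admissible exponent for U. -/
def Admissible {X : Type*} [NormedAddCommGroup X] [NormedSpace ℝ X]
    (U : ℝ → ℝ → X →L[ℝ] X) (γ : ℝ) : Prop :=
  ∃ M : ℝ → ℝ, ContinuousOn M (Ici 0) ∧ (∀ s, 0 ≤ s → 0 < M s) ∧
    ∀ t s, 0 ≤ s → s ≤ t → ‖U t s‖ ≤ M s * Real.exp (γ * (t - s))

/-!
Write `ψ(t, x) = sup_{τ ≥ t} e^{-α(τ-t)} ‖U(τ,t)x‖` (`lyapNorm`), so that `φ_α(t,u) = ψ(t, u t)`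
and `ψ(t, ·)` is `M(t)`-Lipschitz; it therefore suffices to prove `t ↦ ψ(t, x)` continuous for
fixed `x`. Reindexing by the lag `h = τ - t` shows that `ψ(·, x)` is a supremum of continuous
functions, hence lower semicontinuous. For upper semicontinuity take `s ≤ t`: the cocycle law gives
`ψ(t, x) ≤ e^{α(t-s)} ψ(s, x) + M(t) ‖U(t,s)x - x‖`, which controls `ψ` to the right of a point,
and it splits the supremum defining `ψ(s, x)` into the part over `[s, t]`, close to
`‖x‖ ≤ ψ(t, x)` by joint continuity of `U` at the diagonal, and the tail
`e^{-α(t-s)} ψ(t, U(t,s)x)`, which controls `ψ` to the left of a point.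
-/

open Filter Topology

noncomputable def lyapNorm {X : Type*} [NormedAddCommGroup X] [NormedSpace ℝ X]
    (U : ℝ → ℝ → X →L[ℝ] X) (α t : ℝ) (x : X) : ℝ :=
  ⨆ τ : Ici t, Real.exp (-α * ((τ : ℝ) - t)) * ‖U τ t x‖

section LyapNorm

variable {X : Type*} [NormedAddCommGroup X] [NormedSpace ℝ X] {U : ℝ → ℝ → X →L[ℝ] X}
  {α : ℝ} {M : ℝ → ℝ}

lemma exp_mul_norm_apply_le
    (hBound : ∀ t s, 0 ≤ s → s ≤ t → ‖U t s‖ ≤ M s * Real.exp (α * (t - s)))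
    {s t : ℝ} (hs : 0 ≤ s) (hst : s ≤ t) (x : X) :
    Real.exp (-α * (t - s)) * ‖U t s x‖ ≤ M s * ‖x‖ :=
  calc Real.exp (-α * (t - s)) * ‖U t s x‖
      ≤ Real.exp (-α * (t - s)) * (M s * Real.exp (α * (t - s)) * ‖x‖) := by
        gcongr; exact (U t s).le_of_opNorm_le (hBound t s hs hst) x
    _ = M s * ‖x‖ := by rw [neg_mul, Real.exp_neg]; field_simp

lemma exp_mul_norm_apply_eq
    (hComp : ∀ t τ s, 0 ≤ s → s ≤ τ → τ ≤ t → ∀ x : X, U t τ (U τ s x) = U t s x)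
    {s t τ : ℝ} (hs : 0 ≤ s) (hst : s ≤ t) (htτ : t ≤ τ) (x : X) :
    Real.exp (-α * (τ - s)) * ‖U τ s x‖ =
      Real.exp (-α * (t - s)) * (Real.exp (-α * (τ - t)) * ‖U τ t (U t s x)‖) := by
  rw [hComp τ t s hs hst htτ, ← mul_assoc, ← Real.exp_add]
  ring_nf

variable (hBound : ∀ t s, 0 ≤ s → s ≤ t → ‖U t s‖ ≤ M s * Real.exp (α * (t - s)))
include hBound

lemma bddAbove_range_exp_mul_norm_apply {t : ℝ} (ht : 0 ≤ t) (x : X) :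
    BddAbove (range fun τ : Ici t => Real.exp (-α * ((τ : ℝ) - t)) * ‖U τ t x‖) :=
  ⟨M t * ‖x‖, by rintro _ ⟨τ, rfl⟩; exact exp_mul_norm_apply_le hBound ht τ.2 x⟩

lemma exp_mul_norm_apply_le_lyapNorm {t τ : ℝ} (ht : 0 ≤ t) (htτ : t ≤ τ) (x : X) :
    Real.exp (-α * (τ - t)) * ‖U τ t x‖ ≤ lyapNorm U α t x :=
  le_ciSup (bddAbove_range_exp_mul_norm_apply hBound ht x) (⟨τ, htτ⟩ : Ici t)

lemma norm_le_lyapNorm (hId : ∀ t, 0 ≤ t → ∀ x : X, U t t x = x) {t : ℝ} (ht : 0 ≤ t)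
    (x : X) : ‖x‖ ≤ lyapNorm U α t x := by
  simpa [hId t ht x] using exp_mul_norm_apply_le_lyapNorm hBound ht le_rfl x

lemma lyapNorm_le_add {t : ℝ} (ht : 0 ≤ t) (x y : X) :
    lyapNorm U α t x ≤ lyapNorm U α t y + M t * ‖x - y‖ := by
  refine ciSup_le fun ⟨τ, htτ⟩ => ?_
  calc Real.exp (-α * (τ - t)) * ‖U τ t x‖
      ≤ Real.exp (-α * (τ - t)) * ‖U τ t y‖ + Real.exp (-α * (τ - t)) * ‖U τ t (x - y)‖ := by
        rw [← mul_add, map_sub]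
        gcongr
        exact norm_le_norm_add_norm_sub' _ _
    _ ≤ lyapNorm U α t y + M t * ‖x - y‖ :=
        add_le_add (exp_mul_norm_apply_le_lyapNorm hBound ht htτ y)
          (exp_mul_norm_apply_le hBound ht htτ (x - y))

lemma abs_lyapNorm_sub_le {t : ℝ} (ht : 0 ≤ t) (x y : X) :
    |lyapNorm U α t x - lyapNorm U α t y| ≤ M t * ‖x - y‖ := by
  have hxy := lyapNorm_le_add hBound ht x y
  have hyx := lyapNorm_le_add hBound ht y x
  rw [norm_sub_rev] at hyx
  exact abs_sub_le_iff.2 ⟨by linarith, by linarith⟩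

variable (hComp : ∀ t τ s, 0 ≤ s → s ≤ τ → τ ≤ t → ∀ x : X, U t τ (U τ s x) = U t s x)
include hComp

lemma lyapNorm_apply_le {s t : ℝ} (hs : 0 ≤ s) (hst : s ≤ t) (x : X) :
    lyapNorm U α t (U t s x) ≤ Real.exp (α * (t - s)) * lyapNorm U α s x := by
  refine ciSup_le fun ⟨τ, htτ⟩ => ?_
  have hτ := exp_mul_norm_apply_le_lyapNorm hBound hs (hst.trans htτ) x
  rw [exp_mul_norm_apply_eq hComp hs hst htτ, neg_mul, Real.exp_neg] at hτ
  rwa [← inv_mul_le_iff₀ (Real.exp_pos _)]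

lemma lyapNorm_le_exp_mul_lyapNorm_add {s t : ℝ} (hs : 0 ≤ s) (hst : s ≤ t) (x : X) :
    lyapNorm U α t x ≤ Real.exp (α * (t - s)) * lyapNorm U α s x + M t * ‖U t s x - x‖ := by
  have h := lyapNorm_le_add hBound (hs.trans hst) x (U t s x)
  rw [norm_sub_rev] at h
  linarith [lyapNorm_apply_le hBound hComp hs hst x]

lemma lyapNorm_le_of_forall_Icc_le {s t c : ℝ} (hs : 0 ≤ s) (hst : s ≤ t) {x : X}
    (hmid : ∀ τ ∈ Icc s t, Real.exp (-α * (τ - s)) * ‖U τ s x‖ ≤ c)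
    (htail : Real.exp (-α * (t - s)) * lyapNorm U α t (U t s x) ≤ c) :
    lyapNorm U α s x ≤ c := by
  refine ciSup_le fun ⟨τ, hsτ⟩ => ?_
  rcases le_total (τ : ℝ) t with hτt | htτ
  · exact hmid τ ⟨hsτ, hτt⟩
  · rw [exp_mul_norm_apply_eq hComp hs hst htτ]
    refine le_trans ?_ htail
    gcongr
    exact exp_mul_norm_apply_le_lyapNorm hBound (hs.trans hst) htτ _

end LyapNorm

lemma eventually_forall_Icc_of_eventually_nhds_diag {P : ℝ → ℝ → Prop} {a : ℝ}
    (h : ∀ᶠ q : ℝ × ℝ in 𝓝 (a, a), P q.1 q.2) : ∀ᶠ s in 𝓝 a, ∀ τ ∈ Icc s a, P τ s := by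
  obtain ⟨δ, hδ, hP⟩ := Metric.eventually_nhds_iff.1 h
  filter_upwards [Metric.ball_mem_nhds a hδ] with s (hs : dist s a < δ) τ hτ
  have hτa : dist τ a < δ := by
    rw [Real.dist_eq] at hs ⊢
    rw [abs_of_nonpos (by linarith [hτ.2])]
    linarith [neg_abs_le (s - a), hτ.1]
  exact hP (y := (τ, s)) (by rw [Prod.dist_eq]; exact max_lt hτa hs)

section Continuity

variable {X : Type*} [NormedAddCommGroup X] [NormedSpace ℝ X] {U : ℝ → ℝ → X →L[ℝ] X}
  {α : ℝ} {M : ℝ → ℝ}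
  (hId : ∀ t, 0 ≤ t → ∀ x : X, U t t x = x)
  (hComp : ∀ t τ s, 0 ≤ s → s ≤ τ → τ ≤ t → ∀ x : X, U t τ (U τ s x) = U t s x)
  (hCont : ∀ x : X, ContinuousOn (fun p : ℝ × ℝ => U p.1 p.2 x) {p | 0 ≤ p.2 ∧ p.2 ≤ p.1})
  (hM : ContinuousOn M (Ici 0))
  (hBound : ∀ t s, 0 ≤ s → s ≤ t → ‖U t s‖ ≤ M s * Real.exp (α * (t - s)))

include hCont hBound in
lemma lowerSemicontinuousWithinAt_lyapNorm (x : X) {t₀ : ℝ} (ht₀ : 0 ≤ t₀) :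
    LowerSemicontinuousWithinAt (fun t => lyapNorm U α t x) (Ici 0) t₀ := by
  intro c hc
  obtain ⟨⟨τ, ht₀τ⟩, hcτ⟩ := exists_lt_of_lt_ciSup hc
  obtain ⟨h, hh, rfl⟩ : ∃ h, 0 ≤ h ∧ τ = t₀ + h := ⟨τ - t₀, sub_nonneg.2 ht₀τ, by ring⟩
  have hlag : ContinuousWithinAt (fun t => Real.exp (-α * h) * ‖U (t + h) t x‖) (Ici 0) t₀ :=
    continuousWithinAt_const.mul ((hCont x _ ⟨ht₀, le_add_of_nonneg_right hh⟩).comp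
      (f := fun t : ℝ => (t + h, t)) (by fun_prop) fun _ ht => ⟨ht, le_add_of_nonneg_right hh⟩).norm
  filter_upwards [hlag.eventually_const_lt (by simpa only [add_sub_cancel_left] using hcτ),
    self_mem_nhdsWithin] with t hct ht
  refine hct.trans_le ?_
  simpa only [add_sub_cancel_left] using
    exp_mul_norm_apply_le_lyapNorm hBound ht (le_add_of_nonneg_right hh) x

include hId hComp hCont hM hBound in
lemma upperSemicontinuousWithinAt_lyapNorm_Ici (x : X) {t₀ : ℝ} (ht₀ : 0 ≤ t₀) :
    UpperSemicontinuousWithinAt (fun t => lyapNorm U α t x) (Ici t₀) t₀ := by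
  have hU : ContinuousWithinAt (fun t => U t t₀ x) (Ici t₀) t₀ :=
    (hCont x (t₀, t₀) ⟨ht₀, le_rfl⟩).comp (f := fun t : ℝ => (t, t₀))
      (by fun_prop : Continuous fun t : ℝ => (t, t₀)).continuousWithinAt fun _ ht => ⟨ht₀, ht⟩
  have hbound : ContinuousWithinAt
      (fun t => Real.exp (α * (t - t₀)) * lyapNorm U α t₀ x + M t * ‖U t t₀ x - x‖) (Ici t₀) t₀ :=
    ((by fun_prop : Continuous fun t => Real.exp (α * (t - t₀))).continuousWithinAt.mul
      continuousWithinAt_const).add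
        (((hM t₀ ht₀).mono (Ici_subset_Ici.2 ht₀)).mul (hU.sub continuousWithinAt_const).norm)
  intro c hc
  filter_upwards [hbound.eventually_lt_const (by simpa [hId t₀ ht₀ x] using hc),
    self_mem_nhdsWithin] with t hct ht
  exact (lyapNorm_le_exp_mul_lyapNorm_add hBound hComp ht₀ ht x).trans_lt hct

include hId hComp hCont hBound in
lemma upperSemicontinuousWithinAt_lyapNorm_Icc (x : X) {t₀ : ℝ} (ht₀ : 0 ≤ t₀) :
    UpperSemicontinuousWithinAt (fun t => lyapNorm U α t x) (Icc 0 t₀) t₀ := by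
  intro c hc
  obtain ⟨c', hc', hc'c⟩ := exists_between hc
  have hU : ContinuousWithinAt (fun s => U t₀ s x) (Icc 0 t₀) t₀ :=
    (hCont x (t₀, t₀) ⟨ht₀, le_rfl⟩).comp (f := fun s : ℝ => (t₀, s))
      (by fun_prop : Continuous fun s : ℝ => (t₀, s)).continuousWithinAt fun _ hs => hs
  have htail : ContinuousWithinAt
      (fun s => Real.exp (-α * (t₀ - s)) * (lyapNorm U α t₀ x + M t₀ * ‖U t₀ s x - x‖))
      (Icc 0 t₀) t₀ :=
    (by fun_prop : Continuous fun s => Real.exp (-α * (t₀ - s))).continuousWithinAt.mul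
      (continuousWithinAt_const.add
        (continuousWithinAt_const.mul (hU.sub continuousWithinAt_const).norm))
  have hmid : ContinuousWithinAt (fun p : ℝ × ℝ => Real.exp (-α * (p.1 - p.2)) * ‖U p.1 p.2 x‖)
      {p | 0 ≤ p.2 ∧ p.2 ≤ p.1} (t₀, t₀) :=
    (by fun_prop : Continuous fun p : ℝ × ℝ => Real.exp (-α * (p.1 - p.2))).continuousWithinAt.mul
      (hCont x _ ⟨ht₀, le_rfl⟩).norm
  have hx : ‖x‖ < c' := (norm_le_lyapNorm hBound hId ht₀ x).trans_lt hc'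
  have hmid' := eventually_forall_Icc_of_eventually_nhds_diag
    (P := fun τ s => 0 ≤ s ∧ s ≤ τ → Real.exp (-α * (τ - s)) * ‖U τ s x‖ < c')
    (eventually_nhdsWithin_iff.1 (hmid.eventually_lt_const (by simpa [hId t₀ ht₀ x] using hx)))
  filter_upwards [htail.eventually_lt_const (by simpa [hId t₀ ht₀ x] using hc'),
    nhdsWithin_le_nhds hmid', self_mem_nhdsWithin] with s hs_tail hs_mid ⟨hs, hst₀⟩
  refine (lyapNorm_le_of_forall_Icc_le hBound hComp hs hst₀
    (fun τ hτ => (hs_mid τ hτ ⟨hs, hτ.1⟩).le) (le_trans ?_ hs_tail.le)).trans_lt hc'c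
  gcongr
  simpa only [norm_sub_rev] using lyapNorm_le_add hBound ht₀ (U t₀ s x) x

include hId hComp hCont hM hBound in
lemma continuousWithinAt_lyapNorm (x : X) {t₀ : ℝ} (ht₀ : 0 ≤ t₀) :
    ContinuousWithinAt (fun t => lyapNorm U α t x) (Ici 0) t₀ := by
  have hlsc := lowerSemicontinuousWithinAt_lyapNorm hCont hBound x ht₀
  rw [← Icc_union_Ici_eq_Ici ht₀]
  exact ContinuousWithinAt.union
    (continuousWithinAt_iff_lower_upperSemicontinuousWithinAt.2 ⟨hlsc.mono Icc_subset_Ici_self,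
      upperSemicontinuousWithinAt_lyapNorm_Icc hId hComp hCont hBound x ht₀⟩)
    (continuousWithinAt_iff_lower_upperSemicontinuousWithinAt.2 ⟨hlsc.mono (Ici_subset_Ici.2 ht₀),
      upperSemicontinuousWithinAt_lyapNorm_Ici hId hComp hCont hM hBound x ht₀⟩)

end Continuity

theorem stmt1_general {X : Type*} [NormedAddCommGroup X] [NormedSpace ℝ X]
    (U : ℝ → ℝ → X →L[ℝ] X)
    (hId : ∀ t, 0 ≤ t → ∀ x : X, U t t x = x)
    (hComp : ∀ t τ s, 0 ≤ s → s ≤ τ → τ ≤ t → ∀ x : X, U t τ (U τ s x) = U t s x)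
    (hCont : ∀ x : X, ContinuousOn (fun p : ℝ × ℝ => U p.1 p.2 x) {p | 0 ≤ p.2 ∧ p.2 ≤ p.1})
    (α : ℝ) (M : ℝ → ℝ) (hM : ContinuousOn M (Ici 0))
    (hBound : ∀ t s, 0 ≤ s → s ≤ t → ‖U t s‖ ≤ M s * Real.exp (α * (t - s)))
    (u : ℝ → X) (hu : ContinuousOn u (Ici 0)) :
    ContinuousOn (fun t => phi U α t u) (Ici 0) := by
  intro t₀ (ht₀ : 0 ≤ t₀)
  change Tendsto (fun t => lyapNorm U α t (u t)) (𝓝[Ici 0] t₀) (𝓝 (lyapNorm U α t₀ (u t₀)))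
  have hfixed := continuousWithinAt_lyapNorm hId hComp hCont hM hBound (u t₀) ht₀
  have hvary : Tendsto (fun t => lyapNorm U α t (u t) - lyapNorm U α t (u t₀))
      (𝓝[Ici 0] t₀) (𝓝 0) := by
    have hlim : Tendsto (fun t => M t * ‖u t - u t₀‖) (𝓝[Ici 0] t₀) (𝓝 0) := by
      simpa using (hM t₀ ht₀).tendsto.mul
        ((hu t₀ ht₀).tendsto.sub (tendsto_const_nhds (x := u t₀))).norm
    refine squeeze_zero_norm' ?_ hlim
    filter_upwards [self_mem_nhdsWithin] with t ht
    exact abs_lyapNorm_sub_le hBound ht (u t) (u t₀)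
  simpa only [add_sub_cancel, add_zero] using hfixed.tendsto.add hvary

theorem stmt1 {X : Type*} [NormedAddCommGroup X] [NormedSpace ℝ X] [CompleteSpace X]
    (U : ℝ → ℝ → X →L[ℝ] X)
    (hId : ∀ t, 0 ≤ t → ∀ x : X, U t t x = x)
    (hComp : ∀ t τ s, 0 ≤ s → s ≤ τ → τ ≤ t → ∀ x : X, U t τ (U τ s x) = U t s x)
    (hCont : ∀ x : X, ContinuousOn (fun p : ℝ × ℝ => U p.1 p.2 x) {p | 0 ≤ p.2 ∧ p.2 ≤ p.1})
    (α : ℝ) (M : ℝ → ℝ) (hM : ContinuousOn M (Ici 0)) (hMpos : ∀ s, 0 ≤ s → 0 < M s)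
    (hBound : ∀ t s, 0 ≤ s → s ≤ t → ‖U t s‖ ≤ M s * Real.exp (α * (t - s)))
    (u : ℝ → X) (hu : ContinuousOn u (Ici 0)) :
    ContinuousOn (fun t => phi U α t u) (Ici 0) :=
  stmt1_general U hId hComp hCont α M hM hBound u hu
end

section
/- For the scalar evolution family U(t,s) = e^{f(t)−f(s)}·Id on a Banach space X, where f(t) = −2t + t sin²t, the set of admissible exponents equals [−1, ∞); that is, for every α ≥ −1 there is a continuous M : [0,∞) → (0,∞) with e^{f(t)−f(s)} ≤ M(s)e^{α(t−s)} for all t ≥ s ≥ 0, and for every α < −1 no such M exists. -/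
/-!
Since `sin² = 1 - cos²`, we have `f t - f s = -(t - s) - t cos² t + s cos² s`. Dropping the
nonpositive term `-t cos² t` gives `e^{f t - f s} ≤ e^{s cos² s} e^{-(t - s)}`, so `-1` (and hence
every larger exponent) is admissible with `M s = e^{s cos² s}`. Conversely, at the zeros
`t = π/2 + kπ` of the cosine we have `f t - f 0 = -t` exactly, and these `t` are unbounded, so
`e^{-t} ≤ M 0 e^{α t}` fails for large `t` as soon as `α < -1`.
-/

open Set

/-- f(t) = −2t + t sin²t. -/
noncomputable def fEx (t : ℝ) : ℝ := -2 * t + t * (Real.sin t) ^ 2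

open Real

/-- Admissibility of `α` for the scalar evolution family `U(t,s) = e^{f t - f s} • id`, whose
operator norm is `e^{f t - f s}`. -/
def IsAdmissible (f : ℝ → ℝ) (α : ℝ) : Prop :=
  ∃ M : ℝ → ℝ, ContinuousOn M (Ici 0) ∧ (∀ s, 0 ≤ s → 0 < M s) ∧
    ∀ t s, 0 ≤ s → s ≤ t → exp (f t - f s) ≤ M s * exp (α * (t - s))

namespace IsAdmissible

variable {f : ℝ → ℝ} {α β : ℝ}

theorem of_sub_le (g : ℝ → ℝ) (hg : ContinuousOn g (Ici 0))
    (h : ∀ t s, 0 ≤ s → s ≤ t → f t - f s ≤ g s + α * (t - s)) : IsAdmissible f α :=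
  ⟨fun s => exp (g s), continuous_exp.comp_continuousOn hg, fun _ _ => exp_pos _,
    fun t s hs hst => by rw [← exp_add, exp_le_exp]; exact h t s hs hst⟩

theorem mono (h : IsAdmissible f α) (hαβ : α ≤ β) : IsAdmissible f β := by
  obtain ⟨M, hMc, hMpos, hM⟩ := h
  refine ⟨M, hMc, hMpos, fun t s hs hst => (hM t s hs hst).trans ?_⟩
  have : α * (t - s) ≤ β * (t - s) := mul_le_mul_of_nonneg_right hαβ (sub_nonneg.mpr hst)
  exact mul_le_mul_of_nonneg_left (exp_le_exp.mpr this) (hMpos s hs).le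

theorem le_of_frequently_ge (h : IsAdmissible f α)
    (hβ : ∀ x, ∃ t ≥ x, β * t ≤ f t - f 0) : β ≤ α := by
  by_contra! hαβ
  obtain ⟨M, -, hMpos, hM⟩ := h
  obtain ⟨t, ht, hft⟩ := hβ (max 0 ((log (M 0) + 1) / (β - α)))
  have ht0 : 0 ≤ t := (le_max_left _ _).trans ht
  have hlog : log (M 0) + 1 ≤ (β - α) * t :=
    (div_le_iff₀' (sub_pos.mpr hαβ)).mp ((le_max_right _ _).trans ht)
  have hbound : f t - f 0 ≤ log (M 0) + α * t := by
    have := hM t 0 le_rfl ht0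
    rwa [sub_zero, ← exp_log (hMpos 0 le_rfl), ← exp_add, exp_le_exp] at this
  linarith

end IsAdmissible

theorem fEx_sub_fEx (t s : ℝ) :
    fEx t - fEx s = -(t - s) - t * cos t ^ 2 + s * cos s ^ 2 := by
  simp only [fEx, sin_sq]
  ring

theorem fEx_of_cos_eq_zero {t : ℝ} (h : cos t = 0) : fEx t = -t := by
  rw [fEx, sin_sq, h]
  ring

theorem exists_ge_cos_eq_zero (x : ℝ) : ∃ t ≥ x, cos t = 0 := by
  obtain ⟨k, hk⟩ := exists_nat_ge x
  refine ⟨π / 2 + k * π, ?_, by rw [cos_add_nat_mul_pi, cos_pi_div_two, mul_zero]⟩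
  have hk0 : (0 : ℝ) ≤ k := k.cast_nonneg
  nlinarith [pi_gt_three]

theorem isAdmissible_fEx_neg_one : IsAdmissible fEx (-1) :=
  .of_sub_le (fun s => s * cos s ^ 2) (by fun_prop) fun t s hs hst => by
    have : 0 ≤ t * cos t ^ 2 := mul_nonneg (hs.trans hst) (sq_nonneg _)
    linarith [fEx_sub_fEx t s]

theorem neg_one_le_of_isAdmissible_fEx {α : ℝ} (h : IsAdmissible fEx α) : -1 ≤ α :=
  h.le_of_frequently_ge fun x => by
    obtain ⟨t, ht, hcos⟩ := exists_ge_cos_eq_zero x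
    refine ⟨t, ht, ?_⟩
    have hf0 : fEx 0 = 0 := by simp [fEx]
    rw [fEx_of_cos_eq_zero hcos, hf0]
    linarith

theorem stmt5 :
    (∀ α : ℝ, -1 ≤ α → ∃ M : ℝ → ℝ, ContinuousOn M (Ici 0) ∧
        (∀ s, 0 ≤ s → 0 < M s) ∧
        ∀ t s, 0 ≤ s → s ≤ t →
          Real.exp (fEx t - fEx s) ≤ M s * Real.exp (α * (t - s))) ∧
    (∀ α : ℝ, α < -1 → ¬ ∃ M : ℝ → ℝ, ContinuousOn M (Ici 0) ∧
        (∀ s, 0 ≤ s → 0 < M s) ∧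
        ∀ t s, 0 ≤ s → s ≤ t →
          Real.exp (fEx t - fEx s) ≤ M s * Real.exp (α * (t - s))) :=
  ⟨fun _ hα => isAdmissible_fEx_neg_one.mono hα,
    fun _ hα h => hα.not_ge (neg_one_le_of_isAdmissible_fEx h)⟩
end

section
/- For the evolution family U(t,s) = e^{f(t)−f(s)}·Id with f(t) = −2t + t sin²t, the spaces C_α coincide for all admissible exponents α ≥ −1: for every α ≥ −1 and every u ∈ C_α one has φ_{−1}(t,u) ≤ e^{(α+1)π}‖u‖_α for all t ≥ 0, and hence C_α = C_{−1}. -/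
open MeasureTheory Set

/-- The evolution family U(t,s) = e^{f(t)−f(s)}·Id. -/
noncomputable def Uf (X : Type*) [NormedAddCommGroup X] [NormedSpace ℝ X] :
    ℝ → ℝ → X →L[ℝ] X :=
  fun t s => Real.exp (fEx t - fEx s) • ContinuousLinearMap.id ℝ X

/-!
Write `w t = f t + t = -t cos² t`, so that `e^{τ-t} ‖U(τ,t)v‖ = e^{w τ - w t} ‖v‖`. Since `w ≤ 0`
on `[0, ∞)` and `w` vanishes at every zero `σ` of `cos`, the value at any `τ ≥ t` is dominated by
the value at a zero `σ ∈ [t, t + π]`, where `e^{σ-t} = e^{(α+1)(σ-t)} e^{-α(σ-t)}` costs at most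
the factor `e^{(α+1)π}`.
-/

open Real

section Abstract

variable {X : Type*} [NormedAddCommGroup X] [NormedSpace ℝ X] {U : ℝ → ℝ → X →L[ℝ] X}
  {α β K t : ℝ} {u : ℝ → X}

lemma MemC.le_phi (hu : MemC U α u) (ht : 0 ≤ t) {τ : ℝ} (hτ : t ≤ τ) :
    exp (-α * (τ - t)) * ‖U τ t (u t)‖ ≤ phi U α t u := by
  obtain ⟨-, C, hC⟩ := hu
  exact le_ciSup (f := fun τ : Ici t => exp (-α * ((τ : ℝ) - t)) * ‖U τ t (u t)‖)
    ⟨C, by rintro _ ⟨σ, rfl⟩; exact hC t ht σ σ.2⟩ ⟨τ, hτ⟩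

lemma MemC.phi_le_normC (hu : MemC U α u) (ht : 0 ≤ t) : phi U α t u ≤ normC U α u := by
  obtain ⟨-, C, hC⟩ := hu
  refine le_ciSup (f := fun s : Ici (0 : ℝ) => phi U α s u) ⟨C, ?_⟩ ⟨t, ht⟩
  rintro _ ⟨s, rfl⟩
  have : Nonempty (Ici (s : ℝ)) := ⟨⟨s, self_mem_Ici⟩⟩
  exact ciSup_le fun τ => hC s s.2 τ τ.2

lemma MemC.mono (hαβ : α ≤ β) (hu : MemC U α u) : MemC U β u := by
  obtain ⟨hcont, C, hC⟩ := hu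
  refine ⟨hcont, C, fun t ht τ hτ => le_trans ?_ (hC t ht τ hτ)⟩
  gcongr

variable (hK : 0 ≤ K)
  (hdom : ∀ t, 0 ≤ t → ∀ τ, t ≤ τ → ∀ v : X, ∃ σ, t ≤ σ ∧
    exp (-β * (τ - t)) * ‖U τ t v‖ ≤ K * (exp (-α * (σ - t)) * ‖U σ t v‖))
include hK hdom

lemma MemC.of_dominated (hu : MemC U α u) : MemC U β u := by
  obtain ⟨hcont, C, hC⟩ := hu
  refine ⟨hcont, K * C, fun t ht τ hτ => ?_⟩
  obtain ⟨σ, hσ, hle⟩ := hdom t ht τ hτ (u t)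
  exact hle.trans (mul_le_mul_of_nonneg_left (hC t ht σ hσ) hK)

lemma MemC.phi_le_of_dominated (hu : MemC U α u) (ht : 0 ≤ t) :
    phi U β t u ≤ K * normC U α u := by
  have : Nonempty (Ici t) := ⟨⟨t, self_mem_Ici⟩⟩
  refine ciSup_le fun τ => ?_
  obtain ⟨σ, hσ, hle⟩ := hdom t ht τ τ.2 (u t)
  calc _ ≤ K * (exp (-α * (σ - t)) * ‖U σ t (u t)‖) := hle
    _ ≤ K * normC U α u := by
      gcongr
      exact (hu.le_phi ht hσ).trans (hu.phi_le_normC ht)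

end Abstract

lemma Real.exists_cos_eq_zero_mem_Icc (t : ℝ) : ∃ σ ∈ Icc t (t + π), cos σ = 0 := by
  have hzero : (0 : ℝ) ∈ uIcc (cos t) (cos (t + π)) := by
    rw [cos_add_pi, mem_uIcc]
    rcases le_total (cos t) 0 with h | h
    · exact Or.inl ⟨h, by linarith⟩
    · exact Or.inr ⟨by linarith, h⟩
  have hinterval : uIcc t (t + π) = Icc t (t + π) := uIcc_of_le (by linarith [pi_pos])
  obtain ⟨σ, hσ, hcos⟩ := intermediate_value_uIcc continuous_cos.continuousOn hzero
  exact ⟨σ, hinterval ▸ hσ, hcos⟩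

lemma fEx_add_self (t : ℝ) : fEx t + t = -(t * cos t ^ 2) := by
  rw [fEx, sin_sq]
  ring

lemma norm_Uf_apply {X : Type*} [NormedAddCommGroup X] [NormedSpace ℝ X] (τ t : ℝ) (v : X) :
    ‖Uf X τ t v‖ = exp (fEx τ - fEx t) * ‖v‖ := by
  simp [Uf, norm_smul, abs_of_pos (exp_pos _)]

lemma Uf_dominated {X : Type*} [NormedAddCommGroup X] [NormedSpace ℝ X] {α : ℝ} (hα : -1 ≤ α)
    (t : ℝ) (ht : 0 ≤ t) (τ : ℝ) (hτ : t ≤ τ) (v : X) : ∃ σ, t ≤ σ ∧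
      exp (-(-1) * (τ - t)) * ‖Uf X τ t v‖ ≤
        exp ((α + 1) * π) * (exp (-α * (σ - t)) * ‖Uf X σ t v‖) := by
  obtain ⟨σ, ⟨htσ, hσπ⟩, hcos⟩ := exists_cos_eq_zero_mem_Icc t
  refine ⟨σ, htσ, ?_⟩
  have hτ_nonpos : fEx τ + τ ≤ 0 := by
    rw [fEx_add_self, neg_nonpos]
    exact mul_nonneg (ht.trans hτ) (sq_nonneg _)
  have hσ_zero : fEx σ + σ = 0 := by rw [fEx_add_self, hcos]; ring
  have hcost : (α + 1) * (σ - t) ≤ (α + 1) * π := by gcongr <;> linarith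
  calc exp (-(-1) * (τ - t)) * ‖Uf X τ t v‖ = exp ((fEx τ + τ) - (fEx t + t)) * ‖v‖ := by
        rw [norm_Uf_apply, ← mul_assoc, ← exp_add]; ring_nf
    _ ≤ exp ((α + 1) * π + -α * (σ - t) + (fEx σ - fEx t)) * ‖v‖ := by gcongr; linarith
    _ = exp ((α + 1) * π) * (exp (-α * (σ - t)) * ‖Uf X σ t v‖) := by
        rw [norm_Uf_apply, exp_add, exp_add]; ring

theorem stmt6_general {X : Type*} [NormedAddCommGroup X] [NormedSpace ℝ X] :
    ∀ α : ℝ, -1 ≤ α →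
      (∀ u : ℝ → X, MemC (Uf X) α u → ∀ t, 0 ≤ t →
          phi (Uf X) (-1) t u ≤ Real.exp ((α + 1) * Real.pi) * normC (Uf X) α u) ∧
      (∀ u : ℝ → X, MemC (Uf X) α u ↔ MemC (Uf X) (-1) u) := by
  intro α hα
  have hK : 0 ≤ exp ((α + 1) * π) := (exp_pos _).le
  exact ⟨fun u hu t ht => hu.phi_le_of_dominated hK (Uf_dominated hα) ht,
    fun u => ⟨fun hu => hu.of_dominated hK (Uf_dominated hα), fun hu => hu.mono hα⟩⟩

theorem stmt6 {X : Type*} [NormedAddCommGroup X] [NormedSpace ℝ X] [CompleteSpace X] :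
    ∀ α : ℝ, -1 ≤ α →
      (∀ u : ℝ → X, MemC (Uf X) α u → ∀ t, 0 ≤ t →
          phi (Uf X) (-1) t u ≤ Real.exp ((α + 1) * Real.pi) * normC (Uf X) α u) ∧
      (∀ u : ℝ → X, MemC (Uf X) α u ↔ MemC (Uf X) (-1) u) :=
  stmt6_general
end

section
/- Suppose there are constants N, p > 0 such that for all n ∈ ℕ, u ∈ C_α, and t ≥ s ≥ 0: φ_α(t,Φ(s)u)^p (t−s)^n/(n! N^n) ≤ N φ_α(s,u)^p. Then for every δ ∈ (0,1), with Ñ = (N/(1−δ))^{1/p}, one has ‖U(t,s)u(s)‖ ≤ Ñ e^{−δ(t−s)/(pN)} φ_α(s,u) for all u ∈ C_α and t ≥ s ≥ 0. -/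
/-!
Multiplying the `n`-th hypothesis by `δⁿ` and summing over `n` turns the factorial weights into
`exp (δ (t - s) / N)` on the left and the geometric series `∑ δⁿ = 1 / (1 - δ)` on the right, so
`φ_α(t, Φ(s)u)ᵖ ≤ N / (1 - δ) · exp (-δ (t - s) / N) · φ_α(s, u)ᵖ`. Taking `p`-th roots and using
`‖U(t,s)u(s)‖ ≤ φ_α(t, Φ(s)u)` (the term `τ = t` of the supremum, which is bounded by admissibility)
gives the claim.
-/

open MeasureTheory Set

open Real Nat

lemma mul_exp_mul_le_of_forall_mul_pow_div_factorial_le {a c x δ : ℝ} (hδ₀ : 0 ≤ δ) (hδ₁ : δ < 1)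
    (h : ∀ n : ℕ, a * (x ^ n / n !) ≤ c) : a * exp (δ * x) ≤ c / (1 - δ) := by
  have hterm (n : ℕ) : a * ((δ * x) ^ n / n !) ≤ c * δ ^ n := by
    calc a * ((δ * x) ^ n / n !) = δ ^ n * (a * (x ^ n / n !)) := by rw [mul_pow]; ring
      _ ≤ δ ^ n * c := mul_le_mul_of_nonneg_left (h n) (pow_nonneg hδ₀ n)
      _ = c * δ ^ n := mul_comm _ _
  have hexp : HasSum (fun n : ℕ => a * ((δ * x) ^ n / n !)) (a * exp (δ * x)) := by
    rw [exp_eq_exp_ℝ]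
    exact (NormedSpace.expSeries_div_hasSum_exp (δ * x)).mul_left a
  have hgeom : HasSum (fun n : ℕ => c * δ ^ n) (c * (1 - δ)⁻¹) :=
    (hasSum_geometric_of_lt_one hδ₀ hδ₁).mul_left c
  exact div_eq_mul_inv c _ ▸ hasSum_le hterm hexp hgeom

lemma le_rpow_inv_mul_of_rpow_le_mul_rpow {a b k p : ℝ} (ha : 0 ≤ a) (hb : 0 ≤ b) (hk : 0 ≤ k)
    (hp : 0 < p) (h : a ^ p ≤ k * b ^ p) : a ≤ k ^ p⁻¹ * b := by
  rw [← Real.rpow_le_rpow_iff ha (by positivity) hp, Real.mul_rpow (by positivity) hb,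
    ← Real.rpow_mul hk, inv_mul_cancel₀ hp.ne', Real.rpow_one]
  exact h

lemma phi_nonneg {X : Type*} [NormedAddCommGroup X] [NormedSpace ℝ X]
    (U : ℝ → ℝ → X →L[ℝ] X) (α t : ℝ) (u : ℝ → X) : 0 ≤ phi U α t u :=
  Real.iSup_nonneg fun _ => by positivity

lemma norm_le_phi {X : Type*} [NormedAddCommGroup X] [NormedSpace ℝ X]
    {U : ℝ → ℝ → X →L[ℝ] X} {α t : ℝ} (hadm : Admissible U α) (hId : ∀ x, U t t x = x)
    (ht : 0 ≤ t) (u : ℝ → X) : ‖u t‖ ≤ phi U α t u := by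
  obtain ⟨M, -, -, hM⟩ := hadm
  have hbdd : BddAbove (range fun τ : Ici t => exp (-α * ((τ : ℝ) - t)) * ‖U τ t (u t)‖) := by
    refine ⟨M t * ‖u t‖, ?_⟩
    rintro _ ⟨⟨τ, hτ⟩, rfl⟩
    calc exp (-α * (τ - t)) * ‖U τ t (u t)‖
        ≤ exp (-α * (τ - t)) * (M t * exp (α * (τ - t)) * ‖u t‖) := by
          gcongr
          exact (U τ t).le_of_opNorm_le (hM τ t ht hτ) _
      _ = M t * ‖u t‖ := by
          rw [neg_mul, exp_neg]; field_simp
  simpa [phi, hId] using le_ciSup hbdd ⟨t, le_refl t⟩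

theorem stmt15_general {X : Type*} [NormedAddCommGroup X] [NormedSpace ℝ X]
    (U : ℝ → ℝ → X →L[ℝ] X)
    (hId : ∀ t, 0 ≤ t → ∀ x : X, U t t x = x)
    (α : ℝ) (hadm : Admissible U α)
    (N p : ℝ) (hN : 0 < N) (hp : 0 < p)
    (hIter : ∀ n : ℕ, ∀ u : ℝ → X, MemC U α u → ∀ s t, 0 ≤ s → s ≤ t →
      phi U α t (Phim U s u) ^ p * ((t - s) ^ n / (n.factorial * N ^ n)) ≤
        N * phi U α s u ^ p) :
    ∀ δ : ℝ, δ ∈ Ioo (0:ℝ) 1 → ∀ u : ℝ → X, MemC U α u → ∀ s t, 0 ≤ s → s ≤ t →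
      ‖U t s (u s)‖ ≤ (N / (1 - δ)) ^ (1 / p) *
        Real.exp (-δ * (t - s) / (p * N)) * phi U α s u := by
  rintro δ ⟨hδ₀, hδ₁⟩ u hu s t hs hst
  have hδ : 0 < 1 - δ := sub_pos.2 hδ₁
  set A := phi U α t (Phim U s u)
  set B := phi U α s u
  set x := δ * ((t - s) / N)
  have hexp : A ^ p * exp x ≤ N * B ^ p / (1 - δ) :=
    mul_exp_mul_le_of_forall_mul_pow_div_factorial_le hδ₀.le hδ₁ fun n => by
      rw [div_pow, div_div, mul_comm (N ^ n)]
      exact hIter n u hu s t hs hst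
  have hpow : A ^ p ≤ N / (1 - δ) * exp (-x) * B ^ p :=
    calc A ^ p = A ^ p * exp x * exp (-x) := by
          rw [mul_assoc, ← exp_add, add_neg_cancel, exp_zero, mul_one]
      _ ≤ N * B ^ p / (1 - δ) * exp (-x) := by gcongr
      _ = N / (1 - δ) * exp (-x) * B ^ p := by ring
  calc ‖U t s (u s)‖ ≤ A := by
        simpa [A, Phim, hst] using
          norm_le_phi hadm (hId t (hs.trans hst)) (hs.trans hst) (Phim U s u)
    _ ≤ (N / (1 - δ) * exp (-x)) ^ p⁻¹ * B :=
        le_rpow_inv_mul_of_rpow_le_mul_rpow (phi_nonneg ..) (phi_nonneg ..) (by positivity) hp hpow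
    _ = _ := by
        rw [Real.mul_rpow (by positivity) (exp_pos _).le, ← exp_mul, one_div]
        simp only [x]
        ring_nf

theorem stmt15 {X : Type*} [NormedAddCommGroup X] [NormedSpace ℝ X] [CompleteSpace X]
    (U : ℝ → ℝ → X →L[ℝ] X)
    (hId : ∀ t, 0 ≤ t → ∀ x : X, U t t x = x)
    (hComp : ∀ t τ s, 0 ≤ s → s ≤ τ → τ ≤ t → ∀ x : X, U t τ (U τ s x) = U t s x)
    (hCont : ∀ x : X, ContinuousOn (fun p : ℝ × ℝ => U p.1 p.2 x) {p | 0 ≤ p.2 ∧ p.2 ≤ p.1})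
    (α : ℝ) (hadm : Admissible U α)
    (N p : ℝ) (hN : 0 < N) (hp : 0 < p)
    (hIter : ∀ n : ℕ, ∀ u : ℝ → X, MemC U α u → ∀ s t, 0 ≤ s → s ≤ t →
      phi U α t (Phim U s u) ^ p * ((t - s) ^ n / (n.factorial * N ^ n)) ≤
        N * phi U α s u ^ p) :
    ∀ δ : ℝ, δ ∈ Ioo (0:ℝ) 1 → ∀ u : ℝ → X, MemC U α u → ∀ s t, 0 ≤ s → s ≤ t →
      ‖U t s (u s)‖ ≤ (N / (1 - δ)) ^ (1 / p) *
        Real.exp (-δ * (t - s) / (p * N)) * phi U α s u :=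
  stmt15_general U hId α hadm N p hN hp hIter
end

section
/- (Lyapunov-type converse) Let α be admissible for U. If there exist a function W : [0,∞) × C_α → [0,∞) and constants p, K > 0 such that W(t₀,u) ≤ K φ_α(t₀,u)^p and W(t,u) + ∫_{t₀}^{t} φ_α(ξ,u)^p dξ = W(t₀,u) for all t ≥ t₀ ≥ 0 and u ∈ Φ(t₀)C_α, then ∫_{t₀}^∞ φ_α(ξ,u)^p dξ ≤ K φ_α(t₀,u)^p for all such u, and consequently U is nonuniform exponentially stable. -/
open MeasureTheory Set

/-!
Write `φ(ξ)` for `φ_α(ξ, Φ(s)w)`. The Lyapunov identity bounds the total dissipation,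
`∫_{t₀}^∞ φ^p ≤ W(t₀) ≤ K φ(t₀)^p`. Testing it on `t ↦ (M s / M t) • w ∈ C_α` and restarting the
trajectory at later times gives Datko's condition `g r := ∫_r^∞ φ^p ≤ K φ(r)^p` for all `r ≥ s`.
Since `g (r + K) ≤ g ξ ≤ K φ(ξ)^p` on `(r, r + K]`, the tail halves over every period `K`, so `g`
decays like `2^{-(r - s)/K}`. Finally `φ(ξ) ≥ e^{-|α|} ‖U(t,s)w‖` on `(t - 1, t]`, so `‖U(t,s)w‖^p`
is controlled by `g (t - 1)`, which yields exponential decay with rate `log 2 / (K p)`.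
-/

open Filter

lemma integral_Ioi_le_of_lyapunov {f V : ℝ → ℝ} {a : ℝ} (hf0 : ∀ ξ, 0 ≤ f ξ)
    (hf : ∀ b, IntegrableOn f (Ioc a b)) (hV0 : ∀ b, 0 ≤ V b)
    (hV : ∀ b, a ≤ b → V b + ∫ ξ in a..b, f ξ = V a) :
    IntegrableOn f (Ioi a) ∧ ∫ ξ in Ioi a, f ξ ≤ V a := by
  have hle : ∀ᶠ b in atTop, ∫ ξ in a..b, f ξ ≤ V a := by
    filter_upwards [eventually_ge_atTop a] with b hb
    linarith [hV b hb, hV0 b]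
  have hint : IntegrableOn f (Ioi a) :=
    integrableOn_Ioi_of_intervalIntegral_norm_bounded (V a) a hf tendsto_id
      (by simpa only [Real.norm_of_nonneg (hf0 _)] using hle)
  exact ⟨hint, le_of_tendsto (intervalIntegral_tendsto_integral_Ioi a hint tendsto_id) hle⟩

section TailDecay

variable {f : ℝ → ℝ} {s K : ℝ}

lemma integral_Ioi_anti (hf0 : ∀ ξ, 0 ≤ f ξ) (hf : IntegrableOn f (Ioi s)) {r₁ r₂ : ℝ}
    (h₁ : s ≤ r₁) (h₁₂ : r₁ ≤ r₂) : ∫ ξ in Ioi r₂, f ξ ≤ ∫ ξ in Ioi r₁, f ξ :=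
  setIntegral_mono_set (hf.mono_set (Ioi_subset_Ioi h₁)) (ae_of_all _ fun ξ => hf0 ξ)
    (Ioi_subset_Ioi h₁₂).eventuallyLE

lemma two_mul_integral_Ioi_add_le (hK : 0 < K) (hf0 : ∀ ξ, 0 ≤ f ξ)
    (hf : IntegrableOn f (Ioi s)) (htail : ∀ r, s ≤ r → ∫ ξ in Ioi r, f ξ ≤ K * f r)
    {r : ℝ} (hr : s ≤ r) : 2 * ∫ ξ in Ioi (r + K), f ξ ≤ ∫ ξ in Ioi r, f ξ := by
  have hrK : r ≤ r + K := by linarith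
  have hsplit : ∫ ξ in Ioi r, f ξ = (∫ ξ in Ioc r (r + K), f ξ) + ∫ ξ in Ioi (r + K), f ξ := by
    rw [← Ioc_union_Ioi_eq_Ioi hrK]
    exact setIntegral_union (Ioc_disjoint_Ioi le_rfl) measurableSet_Ioi
      (hf.mono_set (Ioc_subset_Ioi_self.trans (Ioi_subset_Ioi hr)))
      (hf.mono_set (Ioi_subset_Ioi (hr.trans hrK)))
  have hlow : ∀ ξ ∈ Ioc r (r + K), (∫ ξ in Ioi (r + K), f ξ) / K ≤ f ξ := fun ξ hξ => by
    rw [div_le_iff₀' hK]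
    exact (integral_Ioi_anti hf0 hf (hr.trans hξ.1.le) hξ.2).trans (htail ξ (hr.trans hξ.1.le))
  have hmid := setIntegral_mono_on (integrableOn_const measure_Ioc_lt_top.ne)
    (hf.mono_set (Ioc_subset_Ioi_self.trans (Ioi_subset_Ioi hr))) measurableSet_Ioc hlow
  rw [setIntegral_const, Real.volume_real_Ioc_of_le hrK, add_sub_cancel_left, smul_eq_mul,
    mul_div_cancel₀ _ hK.ne'] at hmid
  linarith

lemma integral_Ioi_le_two_mul_exp (hK : 0 < K) (hf0 : ∀ ξ, 0 ≤ f ξ)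
    (hf : IntegrableOn f (Ioi s)) (htail : ∀ r, s ≤ r → ∫ ξ in Ioi r, f ξ ≤ K * f r)
    {r : ℝ} (hr : s ≤ r) :
    ∫ ξ in Ioi r, f ξ ≤ 2 * (∫ ξ in Ioi s, f ξ) * Real.exp (-(Real.log 2 / K) * (r - s)) := by
  have hhalf : ∀ n : ℕ, ∫ ξ in Ioi (s + n * K), f ξ ≤ (∫ ξ in Ioi s, f ξ) / 2 ^ n := by
    intro n
    induction n with
    | zero => simp
    | succ n ih =>
      have := two_mul_integral_Ioi_add_le hK hf0 hf htail
        (le_add_of_nonneg_right (by positivity : 0 ≤ (n : ℝ) * K))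
      rw [Nat.cast_succ, add_one_mul, ← add_assoc, pow_succ, ← div_div]
      linarith
  set n := ⌊(r - s) / K⌋₊
  have hn : (r - s) / K < n + 1 := Nat.lt_floor_add_one _
  have hnK : s + n * K ≤ r := by
    have := Nat.floor_le (div_nonneg (sub_nonneg.2 hr) hK.le)
    rw [le_div_iff₀ hK] at this
    linarith
  have hpow : 1 / (2 : ℝ) ^ n ≤ 2 * Real.exp (-(Real.log 2 / K) * (r - s)) := by
    have h2 : (2 : ℝ) ^ (n + 1) = Real.exp ((n + 1) * Real.log 2) := by
      rw [← Real.rpow_natCast, Real.rpow_def_of_pos two_pos]; push_cast; ring_nf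
    have hlog : Real.log 2 / K * (r - s) ≤ (n + 1) * Real.log 2 := by
      rw [div_lt_iff₀ hK] at hn
      rw [div_mul_eq_mul_div, div_le_iff₀ hK]
      nlinarith [Real.log_pos one_lt_two]
    rw [div_le_iff₀ (by positivity), mul_right_comm, ← pow_succ', h2, ← Real.exp_add]
    exact Real.one_le_exp (by linarith)
  calc ∫ ξ in Ioi r, f ξ ≤ ∫ ξ in Ioi (s + n * K), f ξ :=
        integral_Ioi_anti hf0 hf (le_add_of_nonneg_right (by positivity)) hnK
    _ ≤ (∫ ξ in Ioi s, f ξ) * (1 / 2 ^ n) := by rw [mul_one_div]; exact hhalf n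
    _ ≤ _ := by
      rw [mul_assoc, mul_left_comm]
      exact mul_le_mul_of_nonneg_left hpow (setIntegral_nonneg measurableSet_Ioi fun ξ _ => hf0 ξ)

end TailDecay

lemma le_rpow_inv_mul_of_rpow_le {x y C p : ℝ} (hx : 0 ≤ x) (hy : 0 ≤ y) (hC : 0 ≤ C)
    (hp : 0 < p) (h : x ^ p ≤ C * y ^ p) : x ≤ C ^ p⁻¹ * y := by
  rwa [← Real.rpow_le_rpow_iff hx (by positivity) hp, Real.mul_rpow (by positivity) hy,
    Real.rpow_inv_rpow hC hp.ne']

section Trajectory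

variable {X : Type*} [NormedAddCommGroup X] [NormedSpace ℝ X]

def IsCocycle (U : ℝ → ℝ → X →L[ℝ] X) : Prop :=
  ∀ t τ s, 0 ≤ s → s ≤ τ → τ ≤ t → ∀ x : X, U t τ (U τ s x) = U t s x

def HasExpBound (U : ℝ → ℝ → X →L[ℝ] X) (M : ℝ → ℝ) (α : ℝ) : Prop :=
  ∀ t s, 0 ≤ s → s ≤ t → ‖U t s‖ ≤ M s * Real.exp (α * (t - s))

/-- `φ_α(ξ, ·)` along the trajectory through `w` at time `t₀`:
`phi U α ξ (Phim U t₀ v) = trajPhi U α t₀ ξ (v t₀)` for `t₀ ≤ ξ` (`phi_Phim`). -/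
noncomputable def trajPhi (U : ℝ → ℝ → X →L[ℝ] X) (α t₀ ξ : ℝ) (w : X) : ℝ :=
  ⨆ τ : Ici ξ, Real.exp (-α * ((τ : ℝ) - ξ)) * ‖U τ t₀ w‖

variable {U : ℝ → ℝ → X →L[ℝ] X} {M : ℝ → ℝ} {α t₀ ξ : ℝ}

lemma HasExpBound.nonneg (hB : HasExpBound U M α) {s : ℝ} (hs : 0 ≤ s) : 0 ≤ M s :=
  (norm_nonneg _).trans (by simpa using hB s s hs le_rfl)

lemma HasExpBound.exp_mul_norm_le (hB : HasExpBound U M α) (w : X) (h₀ : 0 ≤ t₀)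
    (hξ : t₀ ≤ ξ) {τ : ℝ} (hτ : ξ ≤ τ) :
    Real.exp (-α * (τ - ξ)) * ‖U τ t₀ w‖ ≤ M t₀ * Real.exp (α * (ξ - t₀)) * ‖w‖ := by
  have hexp : Real.exp (-α * (τ - ξ)) * Real.exp (α * (τ - t₀)) = Real.exp (α * (ξ - t₀)) := by
    rw [← Real.exp_add]; ring_nf
  calc Real.exp (-α * (τ - ξ)) * ‖U τ t₀ w‖
      ≤ Real.exp (-α * (τ - ξ)) * (M t₀ * Real.exp (α * (τ - t₀)) * ‖w‖) := by
        gcongr; exact (U τ t₀).le_of_opNorm_le (hB τ t₀ h₀ (hξ.trans hτ)) w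
    _ = M t₀ * Real.exp (α * (ξ - t₀)) * ‖w‖ := by rw [← hexp]; ring

lemma trajPhi_nonneg (U : ℝ → ℝ → X →L[ℝ] X) (α t₀ ξ : ℝ) (w : X) : 0 ≤ trajPhi U α t₀ ξ w :=
  Real.iSup_nonneg fun _ => by positivity

lemma trajPhi_le (hB : HasExpBound U M α) (w : X) (h₀ : 0 ≤ t₀) (hξ : t₀ ≤ ξ) :
    trajPhi U α t₀ ξ w ≤ M t₀ * Real.exp (α * (ξ - t₀)) * ‖w‖ :=
  have : Nonempty (Ici ξ) := ⟨⟨ξ, le_refl ξ⟩⟩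
  ciSup_le fun τ => hB.exp_mul_norm_le w h₀ hξ τ.2

lemma le_trajPhi (hB : HasExpBound U M α) (w : X) (h₀ : 0 ≤ t₀) (hξ : t₀ ≤ ξ) {τ : ℝ}
    (hτ : ξ ≤ τ) : Real.exp (-α * (τ - ξ)) * ‖U τ t₀ w‖ ≤ trajPhi U α t₀ ξ w :=
  le_ciSup (f := fun τ : Ici ξ => Real.exp (-α * ((τ : ℝ) - ξ)) * ‖U τ t₀ w‖)
    ⟨_, forall_mem_range.2 fun τ => hB.exp_mul_norm_le w h₀ hξ τ.2⟩ ⟨τ, hτ⟩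

lemma trajPhi_apply_of_le (hComp : IsCocycle U) (w : X) {t₁ : ℝ} (h₀ : 0 ≤ t₀) (h₁ : t₀ ≤ t₁)
    (hξ : t₁ ≤ ξ) :
    trajPhi U α t₁ ξ (U t₁ t₀ w) = trajPhi U α t₀ ξ w := by
  unfold trajPhi
  congr! 4 with τ
  exact hComp τ t₁ t₀ h₀ h₁ (hξ.trans τ.2) w

lemma phi_Phim (hComp : IsCocycle U) (v : ℝ → X) (h₀ : 0 ≤ t₀) (hξ : t₀ ≤ ξ) :
    phi U α ξ (Phim U t₀ v) = trajPhi U α t₀ ξ (v t₀) := by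
  change trajPhi U α ξ ξ (Phim U t₀ v ξ) = _
  rw [Phim, if_pos hξ]
  exact trajPhi_apply_of_le hComp (v t₀) h₀ hξ le_rfl

/-- `e^{-αξ} φ_α(ξ) = sup_{τ ≥ ξ} e^{-ατ} ‖U(τ, t₀) w‖` is a supremum over shrinking sets. -/
lemma antitoneOn_exp_mul_trajPhi (hB : HasExpBound U M α) (w : X) (h₀ : 0 ≤ t₀) :
    AntitoneOn (fun ξ => Real.exp (-α * ξ) * trajPhi U α t₀ ξ w) (Ici t₀) := by
  intro ξ₁ h₁ ξ₂ _ h₁₂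
  have : Nonempty (Ici ξ₂) := ⟨⟨ξ₂, le_refl ξ₂⟩⟩
  dsimp only
  rw [trajPhi, Real.mul_iSup_of_nonneg (Real.exp_pos _).le]
  refine ciSup_le fun τ => ?_
  calc Real.exp (-α * ξ₂) * (Real.exp (-α * ((τ : ℝ) - ξ₂)) * ‖U τ t₀ w‖)
      = Real.exp (-α * ξ₁) * (Real.exp (-α * ((τ : ℝ) - ξ₁)) * ‖U τ t₀ w‖) := by
        simp only [← mul_assoc, ← Real.exp_add]; ring_nf
    _ ≤ Real.exp (-α * ξ₁) * trajPhi U α t₀ ξ₁ w := by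
        gcongr; exact le_trajPhi hB w h₀ h₁ (h₁₂.trans τ.2)

lemma aemeasurable_trajPhi (hB : HasExpBound U M α) (w : X) (h₀ : 0 ≤ t₀) :
    AEMeasurable (fun ξ => trajPhi U α t₀ ξ w) (volume.restrict (Ici t₀)) := by
  have hexp : Measurable fun ξ : ℝ => Real.exp (α * ξ) := by fun_prop
  refine (hexp.aemeasurable.mul (aemeasurable_restrict_of_antitoneOn measurableSet_Ici
    (antitoneOn_exp_mul_trajPhi hB w h₀))).congr (ae_of_all _ fun ξ => ?_)
  simp only [Pi.mul_apply, ← mul_assoc, ← Real.exp_add, neg_mul, add_neg_cancel, Real.exp_zero,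
    one_mul]

lemma integrableOn_Ioc_trajPhi_rpow (hB : HasExpBound U M α) (w : X) (h₀ : 0 ≤ t₀) {p : ℝ}
    (hp : 0 ≤ p) (b : ℝ) : IntegrableOn (fun ξ => trajPhi U α t₀ ξ w ^ p) (Ioc t₀ b) := by
  refine Integrable.of_bound (C := (M t₀ * Real.exp (|α| * (b - t₀)) * ‖w‖) ^ p)
    (((aemeasurable_trajPhi hB w h₀).mono_measure (Measure.restrict_mono
      (Ioc_subset_Ioi_self.trans Ioi_subset_Ici_self) le_rfl)).pow_const p).aestronglyMeasurable ?_
  filter_upwards [ae_restrict_mem measurableSet_Ioc] with ξ hξ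
  rw [Real.norm_of_nonneg (Real.rpow_nonneg (trajPhi_nonneg ..) p)]
  have := hB.nonneg h₀
  gcongr
  · exact trajPhi_nonneg ..
  refine (trajPhi_le hB w h₀ hξ.1.le).trans ?_
  gcongr
  exacts [by linarith [hξ.1], le_abs_self α, hξ.2]

end Trajectory

section Lyapunov

variable {X : Type*} [NormedAddCommGroup X] [NormedSpace ℝ X]
variable {U : ℝ → ℝ → X →L[ℝ] X} {M : ℝ → ℝ} {α p K : ℝ}

lemma integral_trajPhi_le_of_lyapunov (hComp : IsCocycle U) (hB : HasExpBound U M α)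
    {W : ℝ → (ℝ → X) → ℝ} (hWnn : ∀ t u, 0 ≤ W t u) (hp : 0 ≤ p)
    (hW1 : ∀ t₀, 0 ≤ t₀ → ∀ u : ℝ → X,
      (∃ v : ℝ → X, MemC U α v ∧ u = Phim U t₀ v) →
      W t₀ u ≤ K * phi U α t₀ u ^ p)
    (hW2 : ∀ t₀ t, 0 ≤ t₀ → t₀ ≤ t → ∀ u : ℝ → X,
      (∃ v : ℝ → X, MemC U α v ∧ u = Phim U t₀ v) →
      W t u + (∫ ξ in t₀..t, phi U α ξ u ^ p) = W t₀ u)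
    {t₀ : ℝ} (h₀ : 0 ≤ t₀) {v : ℝ → X} (hv : MemC U α v) :
    IntegrableOn (fun ξ => trajPhi U α t₀ ξ (v t₀) ^ p) (Ioi t₀) ∧
      ∫ ξ in Ioi t₀, trajPhi U α t₀ ξ (v t₀) ^ p ≤ K * trajPhi U α t₀ t₀ (v t₀) ^ p := by
  have hu : ∃ v', MemC U α v' ∧ Phim U t₀ v = Phim U t₀ v' := ⟨v, hv, rfl⟩
  have hV : ∀ b, t₀ ≤ b → W b (Phim U t₀ v) + ∫ ξ in t₀..b, trajPhi U α t₀ ξ (v t₀) ^ p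
      = W t₀ (Phim U t₀ v) := fun b hb => by
    rw [← hW2 t₀ b h₀ hb _ hu, intervalIntegral.integral_congr fun ξ hξ => ?_]
    rw [uIcc_of_le hb] at hξ
    simp only [phi_Phim hComp v h₀ hξ.1]
  obtain ⟨hint, hle⟩ := integral_Ioi_le_of_lyapunov
    (fun ξ => Real.rpow_nonneg (trajPhi_nonneg U α t₀ ξ (v t₀)) p)
    (integrableOn_Ioc_trajPhi_rpow hB (v t₀) h₀ hp) (fun b => hWnn b _) hV
  refine ⟨hint, hle.trans ?_⟩
  simpa only [phi_Phim hComp v h₀ le_rfl] using hW1 t₀ h₀ _ hu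

lemma memC_div_smul (hM : ContinuousOn M (Ici 0)) (hMpos : ∀ s, 0 ≤ s → 0 < M s)
    (hB : HasExpBound U M α) (t₁ : ℝ) (w : X) : MemC U α fun t => (M t₁ / M t) • w := by
  refine ⟨(continuousOn_const.div hM fun t ht => (hMpos t ht).ne').smul continuousOn_const,
    |M t₁| * ‖w‖, fun t ht τ hτ => ?_⟩
  have hMt := hMpos t ht
  calc Real.exp (-α * (τ - t)) * ‖U τ t ((M t₁ / M t) • w)‖
      ≤ M t * Real.exp (α * (t - t)) * ‖(M t₁ / M t) • w‖ := hB.exp_mul_norm_le _ ht le_rfl hτ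
    _ = |M t₁| * ‖w‖ := by
      rw [sub_self, mul_zero, Real.exp_zero, mul_one, norm_smul, Real.norm_eq_abs, abs_div,
        abs_of_pos hMt, ← mul_assoc, mul_div_cancel₀ _ hMt.ne']

def DatkoCondition (U : ℝ → ℝ → X →L[ℝ] X) (α p K : ℝ) : Prop :=
  ∀ s, 0 ≤ s → ∀ w : X, IntegrableOn (fun ξ => trajPhi U α s ξ w ^ p) (Ioi s) ∧
    ∫ ξ in Ioi s, trajPhi U α s ξ w ^ p ≤ K * trajPhi U α s s w ^ p

lemma datkoCondition_of_lyapunov (hComp : IsCocycle U)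
    (hM : ContinuousOn M (Ici 0)) (hMpos : ∀ s, 0 ≤ s → 0 < M s)
    (hB : HasExpBound U M α) {W : ℝ → (ℝ → X) → ℝ} (hWnn : ∀ t u, 0 ≤ W t u) (hp : 0 ≤ p)
    (hW1 : ∀ t₀, 0 ≤ t₀ → ∀ u : ℝ → X,
      (∃ v : ℝ → X, MemC U α v ∧ u = Phim U t₀ v) →
      W t₀ u ≤ K * phi U α t₀ u ^ p)
    (hW2 : ∀ t₀ t, 0 ≤ t₀ → t₀ ≤ t → ∀ u : ℝ → X,
      (∃ v : ℝ → X, MemC U α v ∧ u = Phim U t₀ v) →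
      W t u + (∫ ξ in t₀..t, phi U α ξ u ^ p) = W t₀ u) :
    DatkoCondition U α p K := by
  intro s hs w
  have h := integral_trajPhi_le_of_lyapunov hComp hB hWnn hp hW1 hW2 hs
    (memC_div_smul hM hMpos hB s w)
  rwa [div_self (hMpos s hs).ne', one_smul] at h

end Lyapunov

section Datko

variable {X : Type*} [NormedAddCommGroup X] [NormedSpace ℝ X]
variable {U : ℝ → ℝ → X →L[ℝ] X} {M : ℝ → ℝ} {α p K s t : ℝ}

lemma norm_apply_le_of_le_add_one (hB : HasExpBound U M α) {ν : ℝ} (hν : 0 ≤ ν) (hs : 0 ≤ s)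
    (hst : s ≤ t) (ht : t ≤ s + 1) (w : X) :
    ‖U t s w‖ ≤ Real.exp (|α| + ν) * M s * Real.exp (-ν * (t - s)) * ‖w‖ := by
  have hexp : Real.exp (α * (t - s)) ≤ Real.exp (|α| + ν) * Real.exp (-ν * (t - s)) := by
    rw [← Real.exp_add]
    gcongr
    nlinarith [le_abs_self α, abs_nonneg α]
  calc ‖U t s w‖ ≤ M s * Real.exp (α * (t - s)) * ‖w‖ := (U t s).le_of_opNorm_le (hB t s hs hst) w
    _ ≤ M s * (Real.exp (|α| + ν) * Real.exp (-ν * (t - s))) * ‖w‖ := by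
      have := hB.nonneg hs
      gcongr
    _ = _ := by ring

namespace DatkoCondition

lemma integral_Ioi_le (hD : DatkoCondition U α p K) (hComp : IsCocycle U)
    (hs : 0 ≤ s) (w : X) {r : ℝ} (hr : s ≤ r) :
    ∫ ξ in Ioi r, trajPhi U α s ξ w ^ p ≤ K * trajPhi U α s r w ^ p := by
  have h := (hD r (hs.trans hr) (U r s w)).2
  have heq : ∫ ξ in Ioi r, trajPhi U α r ξ (U r s w) ^ p = ∫ ξ in Ioi r, trajPhi U α s ξ w ^ p :=
    setIntegral_congr_fun measurableSet_Ioi fun ξ hξ => by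
      simp only [trajPhi_apply_of_le hComp w hs hr (le_of_lt hξ)]
  rwa [heq, trajPhi_apply_of_le hComp w hs hr le_rfl] at h

lemma integral_Ioi_le_exp (hD : DatkoCondition U α p K) (hComp : IsCocycle U)
    (hB : HasExpBound U M α) (hp : 0 ≤ p) (hK : 0 < K) (hs : 0 ≤ s) (w : X) {r : ℝ}
    (hr : s ≤ r) :
    ∫ ξ in Ioi r, trajPhi U α s ξ w ^ p
      ≤ 2 * K * (M s * ‖w‖) ^ p * Real.exp (-(Real.log 2 / K) * (r - s)) := by
  have hbase : trajPhi U α s s w ≤ M s * ‖w‖ := by simpa using trajPhi_le hB w hs le_rfl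
  calc ∫ ξ in Ioi r, trajPhi U α s ξ w ^ p
      ≤ 2 * (∫ ξ in Ioi s, trajPhi U α s ξ w ^ p) * Real.exp (-(Real.log 2 / K) * (r - s)) :=
        integral_Ioi_le_two_mul_exp hK (fun ξ => Real.rpow_nonneg (trajPhi_nonneg ..) p)
          (hD s hs w).1 (fun r' hr' => hD.integral_Ioi_le hComp hs w hr') hr
    _ ≤ 2 * (K * (M s * ‖w‖) ^ p) * Real.exp (-(Real.log 2 / K) * (r - s)) := by
        gcongr
        exact (hD s hs w).2.trans (by gcongr; exact trajPhi_nonneg ..)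
    _ = _ := by ring

lemma rpow_exp_mul_norm_le_integral (hD : DatkoCondition U α p K) (hB : HasExpBound U M α)
    (hp : 0 ≤ p) (hs : 0 ≤ s) (ht : s + 1 ≤ t) (w : X) :
    (Real.exp (-|α|) * ‖U t s w‖) ^ p ≤ ∫ ξ in Ioi (t - 1), trajPhi U α s ξ w ^ p := by
  have hint := (hD s hs w).1.mono_set (Ioi_subset_Ioi (by linarith : s ≤ t - 1))
  have hlow : ∀ ξ ∈ Ioc (t - 1) t,
      (Real.exp (-|α|) * ‖U t s w‖) ^ p ≤ trajPhi U α s ξ w ^ p := fun ξ hξ => by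
    gcongr
    refine le_trans ?_ (le_trajPhi hB w hs (by linarith [hξ.1]) hξ.2)
    gcongr
    nlinarith [le_abs_self α, neg_abs_le α, hξ.1, hξ.2]
  calc (Real.exp (-|α|) * ‖U t s w‖) ^ p
      = ∫ _ in Ioc (t - 1) t, (Real.exp (-|α|) * ‖U t s w‖) ^ p := by
        rw [setIntegral_const, Real.volume_real_Ioc_of_le (by linarith), sub_sub_cancel,
          one_smul]
    _ ≤ ∫ ξ in Ioc (t - 1) t, trajPhi U α s ξ w ^ p :=
        setIntegral_mono_on (integrableOn_const measure_Ioc_lt_top.ne)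
          (hint.mono_set Ioc_subset_Ioi_self) measurableSet_Ioc hlow
    _ ≤ ∫ ξ in Ioi (t - 1), trajPhi U α s ξ w ^ p :=
        setIntegral_mono_set hint (ae_of_all _ fun ξ => Real.rpow_nonneg (trajPhi_nonneg ..) p)
          Ioc_subset_Ioi_self.eventuallyLE

lemma norm_apply_le_of_add_one_le (hD : DatkoCondition U α p K) (hComp : IsCocycle U)
    (hB : HasExpBound U M α) (hp : 0 < p) (hK : 0 < K) (hs : 0 ≤ s) (ht : s + 1 ≤ t) (w : X) :
    ‖U t s w‖ ≤ Real.exp (|α| + Real.log 2 / (K * p)) * (2 * K) ^ p⁻¹ * M s *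
      Real.exp (-(Real.log 2 / (K * p)) * (t - s)) * ‖w‖ := by
  set ν := Real.log 2 / (K * p)
  have := hB.nonneg hs
  have hdecay : (Real.exp (-|α|) * ‖U t s w‖) ^ p
      ≤ 2 * K * (M s * ‖w‖ * Real.exp (-ν * (t - 1 - s))) ^ p :=
    calc (Real.exp (-|α|) * ‖U t s w‖) ^ p
        ≤ ∫ ξ in Ioi (t - 1), trajPhi U α s ξ w ^ p :=
          hD.rpow_exp_mul_norm_le_integral hB hp.le hs ht w
      _ ≤ 2 * K * (M s * ‖w‖) ^ p * Real.exp (-(Real.log 2 / K) * (t - 1 - s)) :=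
          hD.integral_Ioi_le_exp hComp hB hp.le hK hs w (by linarith)
      _ = 2 * K * (M s * ‖w‖ * Real.exp (-ν * (t - 1 - s))) ^ p := by
          rw [Real.mul_rpow (by positivity) (Real.exp_nonneg _), ← Real.exp_mul,
            show -ν * (t - 1 - s) * p = -(Real.log 2 / K) * (t - 1 - s) by
              simp only [ν]; field_simp]
          ring
  have hroot := le_rpow_inv_mul_of_rpow_le (by positivity) (by positivity) (by positivity) hp
    hdecay
  calc ‖U t s w‖ = Real.exp |α| * (Real.exp (-|α|) * ‖U t s w‖) := by
        rw [← mul_assoc, ← Real.exp_add, add_neg_cancel, Real.exp_zero, one_mul]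
    _ ≤ Real.exp |α| * ((2 * K) ^ p⁻¹ * (M s * ‖w‖ * Real.exp (-ν * (t - 1 - s)))) := by
        gcongr
    _ = _ := by
        rw [show -ν * (t - 1 - s) = ν + -ν * (t - s) by ring, Real.exp_add, Real.exp_add]
        ring

theorem exists_exp_stable (hD : DatkoCondition U α p K) (hComp : IsCocycle U)
    (hM : ContinuousOn M (Ici 0)) (hMpos : ∀ s, 0 ≤ s → 0 < M s) (hB : HasExpBound U M α)
    (hp : 0 < p) (hK : 0 < K) :
    ∃ ν : ℝ, 0 < ν ∧ ∃ Mt : ℝ → ℝ, ContinuousOn Mt (Ici 0) ∧ (∀ s, 0 ≤ s → 0 < Mt s) ∧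
      ∀ t s, 0 ≤ s → s ≤ t → ‖U t s‖ ≤ Mt s * Real.exp (-ν * (t - s)) := by
  set ν := Real.log 2 / (K * p)
  have hν : 0 < ν := div_pos (Real.log_pos one_lt_two) (by positivity)
  set c := Real.exp (|α| + ν) * ((2 * K) ^ p⁻¹ + 1)
  have hc : Real.exp (|α| + ν) * (2 * K) ^ p⁻¹ ≤ c :=
    mul_le_mul_of_nonneg_left (by linarith) (Real.exp_nonneg _)
  have hc' : Real.exp (|α| + ν) ≤ c :=
    le_mul_of_one_le_right (Real.exp_nonneg _)
      (by linarith [Real.rpow_nonneg (by positivity : 0 ≤ 2 * K) p⁻¹])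
  refine ⟨ν, hν, fun s => c * M s, continuousOn_const.mul hM,
    fun s hs => mul_pos (by positivity) (hMpos s hs), fun t s hs hst => ?_⟩
  have := hMpos s hs
  refine (U t s).opNorm_le_bound (by positivity) fun w => ?_
  show ‖U t s w‖ ≤ c * M s * Real.exp (-ν * (t - s)) * ‖w‖
  rcases le_total t (s + 1) with ht | ht
  · refine (norm_apply_le_of_le_add_one hB hν.le hs hst ht w).trans ?_
    gcongr ?_ * M s * _ * _
  · refine (hD.norm_apply_le_of_add_one_le hComp hB hp hK hs ht w).trans ?_
    gcongr ?_ * M s * _ * _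

end DatkoCondition

end Datko

theorem stmt18_general {X : Type*} [NormedAddCommGroup X] [NormedSpace ℝ X]
    (U : ℝ → ℝ → X →L[ℝ] X)
    (hComp : ∀ t τ s, 0 ≤ s → s ≤ τ → τ ≤ t → ∀ x : X, U t τ (U τ s x) = U t s x)
    (α : ℝ) (M : ℝ → ℝ) (hM : ContinuousOn M (Ici 0)) (hMpos : ∀ s, 0 ≤ s → 0 < M s)
    (hBound : ∀ t s, 0 ≤ s → s ≤ t → ‖U t s‖ ≤ M s * Real.exp (α * (t - s)))
    (W : ℝ → (ℝ → X) → ℝ) (hWnn : ∀ t u, 0 ≤ W t u)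
    (p K : ℝ) (hp : 0 < p) (hK : 0 < K)
    (hW1 : ∀ t₀, 0 ≤ t₀ → ∀ u : ℝ → X,
      (∃ v : ℝ → X, MemC U α v ∧ u = Phim U t₀ v) →
      W t₀ u ≤ K * phi U α t₀ u ^ p)
    (hW2 : ∀ t₀ t, 0 ≤ t₀ → t₀ ≤ t → ∀ u : ℝ → X,
      (∃ v : ℝ → X, MemC U α v ∧ u = Phim U t₀ v) →
      W t u + (∫ ξ in t₀..t, phi U α ξ u ^ p) = W t₀ u) :
    (∀ t₀, 0 ≤ t₀ → ∀ u : ℝ → X,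
        (∃ v : ℝ → X, MemC U α v ∧ u = Phim U t₀ v) →
        (∫ ξ in Ioi t₀, phi U α ξ u ^ p) ≤ K * phi U α t₀ u ^ p) ∧
    (∃ ν : ℝ, 0 < ν ∧ ∃ Mt : ℝ → ℝ, ContinuousOn Mt (Ici 0) ∧
        (∀ s, 0 ≤ s → 0 < Mt s) ∧
        ∀ t s, 0 ≤ s → s ≤ t → ‖U t s‖ ≤ Mt s * Real.exp (-ν * (t - s))) := by
  refine ⟨?_, (datkoCondition_of_lyapunov hComp hM hMpos hBound hWnn hp.le hW1 hW2
    ).exists_exp_stable hComp hM hMpos hBound hp hK⟩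
  rintro t₀ h₀ _ ⟨v, hv, rfl⟩
  have heq : ∫ ξ in Ioi t₀, phi U α ξ (Phim U t₀ v) ^ p
      = ∫ ξ in Ioi t₀, trajPhi U α t₀ ξ (v t₀) ^ p :=
    setIntegral_congr_fun measurableSet_Ioi fun ξ hξ => by simp only [phi_Phim hComp v h₀ hξ.le]
  rw [heq, phi_Phim hComp v h₀ le_rfl]
  exact (integral_trajPhi_le_of_lyapunov hComp hBound hWnn hp.le hW1 hW2 h₀ hv).2

theorem stmt18 {X : Type*} [NormedAddCommGroup X] [NormedSpace ℝ X] [CompleteSpace X]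
    (U : ℝ → ℝ → X →L[ℝ] X)
    (hId : ∀ t, 0 ≤ t → ∀ x : X, U t t x = x)
    (hComp : ∀ t τ s, 0 ≤ s → s ≤ τ → τ ≤ t → ∀ x : X, U t τ (U τ s x) = U t s x)
    (hCont : ∀ x : X, ContinuousOn (fun p : ℝ × ℝ => U p.1 p.2 x) {p | 0 ≤ p.2 ∧ p.2 ≤ p.1})
    (α : ℝ) (M : ℝ → ℝ) (hM : ContinuousOn M (Ici 0)) (hMpos : ∀ s, 0 ≤ s → 0 < M s)
    (hBound : ∀ t s, 0 ≤ s → s ≤ t → ‖U t s‖ ≤ M s * Real.exp (α * (t - s)))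
    (W : ℝ → (ℝ → X) → ℝ) (hWnn : ∀ t u, 0 ≤ W t u)
    (p K : ℝ) (hp : 0 < p) (hK : 0 < K)
    (hW1 : ∀ t₀, 0 ≤ t₀ → ∀ u : ℝ → X,
      (∃ v : ℝ → X, MemC U α v ∧ u = Phim U t₀ v) →
      W t₀ u ≤ K * phi U α t₀ u ^ p)
    (hW2 : ∀ t₀ t, 0 ≤ t₀ → t₀ ≤ t → ∀ u : ℝ → X,
      (∃ v : ℝ → X, MemC U α v ∧ u = Phim U t₀ v) →
      W t u + (∫ ξ in t₀..t, phi U α ξ u ^ p) = W t₀ u) :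
    (∀ t₀, 0 ≤ t₀ → ∀ u : ℝ → X,
        (∃ v : ℝ → X, MemC U α v ∧ u = Phim U t₀ v) →
        (∫ ξ in Ioi t₀, phi U α ξ u ^ p) ≤ K * phi U α t₀ u ^ p) ∧
    (∃ ν : ℝ, 0 < ν ∧ ∃ Mt : ℝ → ℝ, ContinuousOn Mt (Ici 0) ∧
        (∀ s, 0 ≤ s → 0 < Mt s) ∧
        ∀ t s, 0 ≤ s → s ≤ t → ‖U t s‖ ≤ Mt s * Real.exp (-ν * (t - s))) :=
  stmt18_general U hComp α M hM hMpos hBound W hWnn p K hp hK hW1 hW2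
end
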